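/- Let a, b, c, d, t, x, ỹ ∈ ℂ with b ≠ 0, b ≠ c and a ≠ b. Set x₁ = a/b, x₂ = (a−c)/(b−c), x₃ = 1/b, x₄ = d/(b−c) and μ = b(b−c). Assume x₃·t − x₁ ≠ 0, and define t₁ = −1, t₂ = (x₃t − 1)/(x₃t − x₁), t₃ = x(1 − x₁)/(x₃t − x₁), and z = x₃(x₁ − 1)²·ỹ/(x₃t − x₁)³. Then z² = t₁t₂t₃(t₁ + t₂ + t₃)(t₁ + x₁t₂ + x₃t₃)(t₁ + x₂t₂ + x₄t₃) holds if and only if μ·ỹ² = x(x−1)(x−t)(t−a)(t−b)(t−c−d·x). (This is the birational equivalence between the double-sextic K3 family in Matsumoto's normal form and the μ-twist of the family X_{a,b,c,d}.) -/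

import Mathlib

/-! Since `x₃ t - x₁ = (t - a)/b`, the substitution reads `t₂ = (t - b)/(t - a)`,
`t₃ = x (b - a)/(t - a)` and `z = (a - b)² ỹ/(t - a)³`. Both `z²` and the Matsumoto sextic
then carry the nonzero factor `(a - b)⁴/(t - a)⁶`, and after cancelling it the sextic is
`x (x - 1)(x - t)(t - a)(t - b)(t - c - d x)/μ`. -/

section

variable {K : Type*} [Field K]

def matsumotoSextic (x₁ x₂ x₃ x₄ t₁ t₂ t₃ : K) : K :=
  t₁*t₂*t₃*(t₁ + t₂ + t₃)*(t₁ + x₁*t₂ + x₃*t₃)*(t₁ + x₂*t₂ + x₄*t₃)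

def twistSextic (a b c d t x : K) : K :=
  x*(x - 1)*(x - t)*(t - a)*(t - b)*(t - c - d*x)

theorem matsumotoSextic_eq_twistSextic {a b c d t x : K} (hb : b ≠ 0) (hbc : b ≠ c)
    (hta : t ≠ a) :
    matsumotoSextic (a/b) ((a - c)/(b - c)) (1/b) (d/(b - c)) (-1) ((t - b)/(t - a))
        (x*(b - a)/(t - a)) =
      (a - b)^4/(t - a)^6 * (twistSextic a b c d t x / (b*(b - c))) := by
  have hbc' : b - c ≠ 0 := sub_ne_zero.2 hbc
  have hta' : t - a ≠ 0 := sub_ne_zero.2 hta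
  unfold matsumotoSextic twistSextic
  field_simp
  ring

end

/-- Birational equivalence between the double-sextic K3 family in Matsumoto's normal
form and the `μ`-twist of the family `X_{a,b,c,d}`. -/
theorem double_sextic_iff_mu_twist
    (a b c d t x yt : ℂ)
    (hb : b ≠ 0) (hbc : b ≠ c) (hab : a ≠ b)
    (x₁ x₂ x₃ x₄ μ : ℂ)
    (hx₁ : x₁ = a / b) (hx₂ : x₂ = (a - c) / (b - c)) (hx₃ : x₃ = 1 / b)
    (hx₄ : x₄ = d / (b - c)) (hμ : μ = b * (b - c))
    (hden : x₃ * t - x₁ ≠ 0)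
    (t₁ t₂ t₃ z : ℂ)
    (ht₁ : t₁ = -1)
    (ht₂ : t₂ = (x₃*t - 1) / (x₃*t - x₁))
    (ht₃ : t₃ = x*(1 - x₁) / (x₃*t - x₁))
    (hz : z = x₃*(x₁ - 1)^2*yt / (x₃*t - x₁)^3) :
    z^2 = t₁*t₂*t₃*(t₁ + t₂ + t₃)*(t₁ + x₁*t₂ + x₃*t₃)*(t₁ + x₂*t₂ + x₄*t₃) ↔
      μ * yt^2 = x*(x - 1)*(x - t)*(t - a)*(t - b)*(t - c - d*x) := by
  subst hx₁ hx₂ hx₃ hx₄ hμ ht₁ ht₂ ht₃ hz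
  have hta : t ≠ a := by rintro rfl; exact hden (by ring)
  have hta' : t - a ≠ 0 := sub_ne_zero.2 hta
  have ht₂ : (1/b*t - 1)/(1/b*t - a/b) = (t - b)/(t - a) := by field_simp
  have ht₃ : x*(1 - a/b)/(1/b*t - a/b) = x*(b - a)/(t - a) := by field_simp
  have hz : (1/b*(a/b - 1)^2*yt/(1/b*t - a/b)^3)^2 = (a - b)^4/(t - a)^6 * yt^2 := by
    field_simp
  have hk : (a - b)^4/(t - a)^6 ≠ 0 :=
    div_ne_zero (pow_ne_zero _ (sub_ne_zero.2 hab)) (pow_ne_zero _ hta')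
  have hsextic := matsumotoSextic_eq_twistSextic (c := c) (d := d) (x := x) hb hbc hta
  unfold matsumotoSextic twistSextic at hsextic
  rw [ht₂, ht₃, hz, hsextic, mul_right_inj' hk, eq_div_iff (mul_ne_zero hb (sub_ne_zero.2 hbc)),
    mul_comm]
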